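/- The gamma function Γ is the unique function f : (0,∞) → (0,∞) satisfying: (a) f(x+1) = x f(x) for all x > 0; (b) f(1) = 1; (c) f is log-concave of order two, i.e., log f is 2-concave on (0,∞) (all third divided differences of log f are ≤ 0). -/

import Mathlib

open Filter Finset Real

/-- Divided difference of `h` at the points `x 0, …, x (m-1)` (assumed pairwise distinct),
via the Lagrange formula. -/
noncomputable def divDiff (h : ℝ → ℝ) {m : ℕ} (x : Fin m → ℝ) : ℝ :=
  ∑ i, h (x i) / ∏ j ∈ Finset.univ.erase i, (x i - x j)

/-- `h` is convex of order `n` on `I` : all divided differences at `n+2` increasing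
points of `I` are nonnegative. -/
def NConvexOn (n : ℕ) (I : Set ℝ) (h : ℝ → ℝ) : Prop :=
  ∀ x : Fin (n + 2) → ℝ, StrictMono x → (∀ i, x i ∈ I) → 0 ≤ divDiff h x

/-- `h` is concave of order `n` on `I` if `-h` is convex of order `n` on `I`. -/
def NConcaveOn (n : ℕ) (I : Set ℝ) (h : ℝ → ℝ) : Prop :=
  NConvexOn n I (fun t => -h t)

/-! Write `[x₀, …, xₖ; h]` for divided differences.

Existence: `-log Γ` is the pointwise limit of `-log (GammaSeq · n)`, an affine function plus
`∑_{j ≤ n} log (· + j)`. A function `f` with convex derivative is 2-convex: `f` minus its quadratic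
interpolant at `a < b < c` has, by Rolle, a derivative vanishing at two points of `(a, c)`; being
convex, that derivative is nonnegative beyond `c`, so the difference is nonnegative at `d`, where it
equals `[a,b,c,d; f] (d - a) (d - b) (d - c)`.

Uniqueness: since `[a,b,c,d; g] (d - a) = [b,c,d; g] - [a,b,c; g]`, 2-concavity of `g = log ∘ f`
makes second divided differences decrease as the nodes move right, so
`[a,b,c; g] ≥ [b,c,c+1; g] ≥ [c,c+1,c+2; g] = (log (c + 1) - log c) / 2 ≥ 0` by the functional
equation. Hence `g` is convex and the Bohr–Mollerup theorem applies. -/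

open Set Topology

lemma Fin.prod_erase_univ_eq_prod_succAbove {M : Type*} [CommMonoid M] {n : ℕ}
    (i : Fin (n + 1)) (g : Fin (n + 1) → M) :
    ∏ j ∈ Finset.univ.erase i, g j = ∏ j, g (i.succAbove j) := by
  rw [← Finset.compl_singleton, ← Fin.image_succAbove_univ,
    Finset.prod_image Fin.succAbove_right_injective.injOn]

section DivDiff

variable {m : ℕ} (x : Fin m → ℝ)

lemma divDiff_add (f g : ℝ → ℝ) :
    divDiff (fun t => f t + g t) x = divDiff f x + divDiff g x := by
  simp only [divDiff, add_div, Finset.sum_add_distrib]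

lemma divDiff_neg (f : ℝ → ℝ) : divDiff (fun t => -f t) x = -divDiff f x := by
  simp only [divDiff, neg_div, Finset.sum_neg_distrib]

lemma divDiff_sum {ι : Type*} (s : Finset ι) (f : ι → ℝ → ℝ) :
    divDiff (fun t => ∑ j ∈ s, f j t) x = ∑ j ∈ s, divDiff (f j) x := by
  simp only [divDiff, Finset.sum_div]
  exact Finset.sum_comm

lemma tendsto_divDiff {ι : Type*} {l : Filter ι} {F : ι → ℝ → ℝ} {f : ℝ → ℝ}
    (hF : ∀ i, Tendsto (fun k => F k (x i)) l (𝓝 (f (x i)))) :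
    Tendsto (fun k => divDiff (F k) x) l (𝓝 (divDiff f x)) :=
  tendsto_finsetSum _ fun i _ => (hF i).div_const _

end DivDiff

section ThreeAndFourPoints

variable (h : ℝ → ℝ) (a b c d : ℝ)

lemma divDiff_fin_three :
    divDiff h ![a, b, c] =
      h a / ((a - b) * (a - c)) + h b / ((b - a) * (b - c)) + h c / ((c - a) * (c - b)) := by
  simp [divDiff, Fin.sum_univ_three, Fin.prod_erase_univ_eq_prod_succAbove, Fin.succAbove]

lemma divDiff_fin_four :
    divDiff h ![a, b, c, d] =
      h a / ((a - b) * (a - c) * (a - d)) + h b / ((b - a) * (b - c) * (b - d))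
        + h c / ((c - a) * (c - b) * (c - d)) + h d / ((d - a) * (d - b) * (d - c)) := by
  simp [divDiff, Fin.sum_univ_four, Fin.prod_erase_univ_eq_prod_succAbove, Fin.prod_univ_three,
    Fin.succAbove, mul_assoc]

variable {a b c d}

lemma divDiff_fin_three_eq_slope (hab : a ≠ b) (hac : a ≠ c) (hbc : b ≠ c) :
    divDiff h ![a, b, c] = (slope h b c - slope h a b) / (c - a) := by
  rw [divDiff_fin_three, slope_def_field, slope_def_field]
  field_simp
  ring

lemma divDiff_fin_four_eq_sub_div (hab : a ≠ b) (hac : a ≠ c) (had : a ≠ d) (hbc : b ≠ c)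
    (hbd : b ≠ d) (hcd : c ≠ d) :
    divDiff h ![a, b, c, d] = (divDiff h ![b, c, d] - divDiff h ![a, b, c]) / (d - a) := by
  rw [divDiff_fin_four, divDiff_fin_three, divDiff_fin_three]
  field_simp
  ring

lemma newton_fin_three (hab : a ≠ b) (hac : a ≠ c) (hbc : b ≠ c) :
    h a + slope h a b * (c - a) + divDiff h ![a, b, c] * ((c - a) * (c - b)) = h c := by
  rw [divDiff_fin_three, slope_def_field]
  field_simp
  ring

lemma newton_fin_four (hab : a ≠ b) (hac : a ≠ c) (had : a ≠ d) (hbc : b ≠ c)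
    (hbd : b ≠ d) (hcd : c ≠ d) :
    h a + slope h a b * (d - a) + divDiff h ![a, b, c] * ((d - a) * (d - b))
      + divDiff h ![a, b, c, d] * ((d - a) * (d - b) * (d - c)) = h d := by
  rw [divDiff_fin_four, divDiff_fin_three, slope_def_field]
  field_simp
  ring

end ThreeAndFourPoints

namespace NConvexOn

variable {n : ℕ} {I : Set ℝ}

lemma mono {J : Set ℝ} {f : ℝ → ℝ} (hf : NConvexOn n I f) (hJI : J ⊆ I) : NConvexOn n J f :=
  fun x hx hxJ => hf x hx fun i => hJI (hxJ i)

lemma congr {f g : ℝ → ℝ} (hf : NConvexOn n I f) (hfg : EqOn f g I) : NConvexOn n I g := by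
  intro x hx hxI
  have : divDiff g x = divDiff f x := by
    simp only [divDiff, fun i => hfg (hxI i)]
  exact this ▸ hf x hx hxI

lemma add {f g : ℝ → ℝ} (hf : NConvexOn n I f) (hg : NConvexOn n I g) :
    NConvexOn n I (fun t => f t + g t) := fun x hx hxI => by
  rw [divDiff_add]
  exact add_nonneg (hf x hx hxI) (hg x hx hxI)

lemma sum {ι : Type*} {s : Finset ι} {f : ι → ℝ → ℝ} (hf : ∀ j ∈ s, NConvexOn n I (f j)) :
    NConvexOn n I (fun t => ∑ j ∈ s, f j t) := fun x hx hxI => by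
  rw [divDiff_sum]
  exact Finset.sum_nonneg fun j hj => hf j hj x hx hxI

lemma of_tendsto {ι : Type*} {l : Filter ι} [l.NeBot] {F : ι → ℝ → ℝ} {f : ℝ → ℝ}
    (hF : ∀ᶠ k in l, NConvexOn n I (F k))
    (hlim : ∀ t ∈ I, Tendsto (fun k => F k t) l (𝓝 (f t))) : NConvexOn n I f :=
  fun x hx hxI => ge_of_tendsto (tendsto_divDiff x fun i => hlim _ (hxI i))
    (hF.mono fun _ hk => hk x hx hxI)

end NConvexOn

lemma nConvexOn_two_iff {I : Set ℝ} {f : ℝ → ℝ} :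
    NConvexOn 2 I f ↔ ∀ a b c d, a ∈ I → b ∈ I → c ∈ I → d ∈ I → a < b → b < c → c < d →
      0 ≤ divDiff f ![a, b, c, d] := by
  refine ⟨fun hf a b c d ha hb hc hd hab hbc hcd => hf _ ?_ ?_, fun hf x hx hxI => ?_⟩
  · refine Fin.strictMono_iff_lt_succ.2 fun i => ?_
    fin_cases i <;> assumption
  · intro i
    fin_cases i <;> assumption
  · have hx4 : x = ![x 0, x 1, x 2, x 3] := by
      ext i
      fin_cases i <;> rfl
    rw [hx4]
    exact hf _ _ _ _ (hxI 0) (hxI 1) (hxI 2) (hxI 3) (hx (by decide)) (hx (by decide))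
      (hx (by decide))

lemma ConvexOn.nonneg_of_eq_zero_of_eq_zero {I : Set ℝ} {f : ℝ → ℝ} (hf : ConvexOn ℝ I f)
    {x y z : ℝ} (hx : x ∈ I) (hz : z ∈ I) (hxy : x < y) (hyz : y < z) (hfx : f x = 0)
    (hfy : f y = 0) : 0 ≤ f z := by
  have := hf.slope_mono_adjacent hx hz hxy hyz
  rwa [hfx, hfy, sub_zero, zero_div, sub_zero, le_div_iff₀ (sub_pos.2 hyz), zero_mul] at this

lemma nonneg_of_three_zeros_of_convexOn_deriv {I : Set ℝ} (hI : Convex ℝ I) {φ φ' : ℝ → ℝ}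
    (hφ : ∀ t ∈ I, HasDerivAt φ (φ' t) t) (hφ' : ConvexOn ℝ I φ') {a b c d : ℝ} (ha : a ∈ I)
    (hd : d ∈ I) (hab : a < b) (hbc : b < c) (hcd : c < d) (hφa : φ a = 0) (hφb : φ b = 0)
    (hφc : φ c = 0) : 0 ≤ φ d := by
  have hsub : ∀ {u v}, a ≤ u → v ≤ d → Icc u v ⊆ I := fun hu hv =>
    (Icc_subset_Icc hu hv).trans (hI.ordConnected.out ha hd)
  have hcont : ∀ {u v}, a ≤ u → v ≤ d → ContinuousOn φ (Icc u v) := fun hu hv t ht =>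
    (hφ t (hsub hu hv ht)).continuousAt.continuousWithinAt
  have hderiv : ∀ {u v}, a ≤ u → v ≤ d → ∀ t ∈ Ioo u v, HasDerivAt φ (φ' t) t :=
    fun hu hv t ht => hφ t (hsub hu hv (Ioo_subset_Icc_self ht))
  have hbd := (hbc.trans hcd).le
  obtain ⟨ξ₁, hξ₁, hφ'ξ₁⟩ := exists_hasDerivAt_eq_zero hab (hcont le_rfl hbd)
    (hφa.trans hφb.symm) (hderiv le_rfl hbd)
  obtain ⟨ξ₂, hξ₂, hφ'ξ₂⟩ := exists_hasDerivAt_eq_zero hbc (hcont hab.le hcd.le)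
    (hφb.trans hφc.symm) (hderiv hab.le hcd.le)
  obtain ⟨η, hη, hφ'η⟩ := exists_hasDerivAt_eq_slope φ φ' hcd
    (hcont (hab.trans hbc).le le_rfl) (hderiv (hab.trans hbc).le le_rfl)
  have hφ'η_nonneg : 0 ≤ φ' η :=
    hφ'.nonneg_of_eq_zero_of_eq_zero (hsub le_rfl le_rfl ⟨hξ₁.1.le, hξ₁.2.le.trans hbd⟩)
      (hsub le_rfl le_rfl ⟨(hab.trans (hbc.trans hη.1)).le, hη.2.le⟩) (hξ₁.2.trans hξ₂.1)
      (hξ₂.2.trans hη.1) hφ'ξ₁ hφ'ξ₂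
  rwa [hφ'η, hφc, sub_zero, le_div_iff₀ (sub_pos.2 hcd), zero_mul] at hφ'η_nonneg

theorem nConvexOn_two_of_convexOn_deriv {I : Set ℝ} (hI : Convex ℝ I) {f f' : ℝ → ℝ}
    (hf : ∀ t ∈ I, HasDerivAt f (f' t) t) (hf' : ConvexOn ℝ I f') : NConvexOn 2 I f := by
  refine nConvexOn_two_iff.2 fun a b c d ha _ _ hd hab hbc hcd => ?_
  set s := slope f a b
  set D := divDiff f ![a, b, c]
  -- `φ` is `f` minus its quadratic interpolant at `a, b, c`
  set φ : ℝ → ℝ :=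
    fun t => f t - (D * t ^ 2 + (s - D * (a + b)) * t + (f a - s * a + D * a * b))
  have hφ : ∀ t ∈ I, HasDerivAt φ (f' t - (2 * D * t + (s - D * (a + b)))) t := fun t ht => by
    refine (hf t ht).sub (((((hasDerivAt_pow 2 t).const_mul D).add
      ((hasDerivAt_id' t).const_mul (s - D * (a + b)))).add_const _).congr_deriv ?_)
    push_cast
    ring
  have hφd : φ d = divDiff f ![a, b, c, d] * ((d - a) * (d - b) * (d - c)) := by
    simp only [φ]
    linear_combination -newton_fin_four f hab.ne (hab.trans hbc).ne
      (hab.trans (hbc.trans hcd)).ne hbc.ne (hbc.trans hcd).ne hcd.ne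
  have hφd_nonneg : 0 ≤ φ d := by
    refine nonneg_of_three_zeros_of_convexOn_deriv hI hφ
      (hf'.sub (((LinearMap.mul ℝ ℝ (2 * D)).concaveOn hI).add_const _)) ha hd hab hbc hcd
      (by simp only [φ]; ring) ?_ ?_
    · simp only [φ, s, slope_def_field]
      field_simp [sub_ne_zero.2 hab.ne']
      ring
    · simp only [φ]
      linear_combination -newton_fin_three f hab.ne (hab.trans hbc).ne hbc.ne
  rw [hφd] at hφd_nonneg
  exact nonneg_of_mul_nonneg_left hφd_nonneg
    (mul_pos (mul_pos (sub_pos.2 (hab.trans (hbc.trans hcd))) (sub_pos.2 (hbc.trans hcd)))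
      (sub_pos.2 hcd))

lemma nConvexOn_two_log_add (k : ℝ) : NConvexOn 2 (Ioi (-k)) (fun x => log (x + k)) := by
  refine nConvexOn_two_of_convexOn_deriv (convex_Ioi _) (f' := fun x => (x + k)⁻¹)
    (fun x hx => ?_) ?_
  · simpa using ((hasDerivAt_id' x).add_const k).log (by linarith [mem_Ioi.1 hx])
  · simpa [Function.comp_def, add_comm] using (convexOn_zpow (𝕜 := ℝ) (-1)).translate_left k

lemma nConvexOn_two_affine (I : Set ℝ) (p q : ℝ) : NConvexOn 2 I (fun x => p * x + q) :=
  (nConvexOn_two_of_convexOn_deriv convex_univ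
    (fun x _ => ((hasDerivAt_id' x).const_mul p).add_const q) (convexOn_const _ convex_univ)).mono
    (subset_univ I)

lemma neg_log_GammaSeq {x : ℝ} (hx : 0 < x) {n : ℕ} (hn : n ≠ 0) :
    -log (GammaSeq x n) =
      (-log n * x + -log n.factorial) + ∑ j ∈ Finset.range (n + 1), log (x + j) := by
  have hn0 : (0 : ℝ) < n := by positivity
  rw [GammaSeq, log_div (by positivity) (Finset.prod_ne_zero_iff.2 fun j _ => by positivity),
    log_mul (by positivity) (by positivity), log_rpow hn0,
    log_prod fun j _ => by positivity]
  ring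

lemma nConvexOn_two_neg_log_GammaSeq {n : ℕ} (hn : n ≠ 0) :
    NConvexOn 2 (Ioi 0) (fun x => -log (GammaSeq x n)) :=
  ((nConvexOn_two_affine _ (-log n) (-log n.factorial)).add
    (NConvexOn.sum (s := Finset.range (n + 1)) fun j _ =>
      (nConvexOn_two_log_add (j : ℝ)).mono (Ioi_subset_Ioi (by simp)))).congr
    fun _ hx => (neg_log_GammaSeq hx hn).symm

theorem nConcaveOn_two_log_Gamma : NConcaveOn 2 (Ioi 0) (fun x => log (Gamma x)) :=
  NConvexOn.of_tendsto ((eventually_ne_atTop 0).mono fun _ => nConvexOn_two_neg_log_GammaSeq)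
    fun x hx => ((GammaSeq_tendsto_Gamma x).log (Gamma_pos_of_pos hx).ne').neg

lemma NConcaveOn.divDiff_fin_three_le {I : Set ℝ} {g : ℝ → ℝ} (hg : NConcaveOn 2 I g)
    {a b c d : ℝ} (ha : a ∈ I) (hb : b ∈ I) (hc : c ∈ I) (hd : d ∈ I) (hab : a < b) (hbc : b < c)
    (hcd : c < d) : divDiff g ![b, c, d] ≤ divDiff g ![a, b, c] := by
  have := nConvexOn_two_iff.1 hg a b c d ha hb hc hd hab hbc hcd
  rwa [divDiff_neg, divDiff_fin_four_eq_sub_div g hab.ne (hab.trans hbc).ne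
    (hab.trans (hbc.trans hcd)).ne hbc.ne (hbc.trans hcd).ne hcd.ne, neg_nonneg,
    div_le_iff₀ (sub_pos.2 (hab.trans (hbc.trans hcd))), zero_mul, sub_nonpos] at this

lemma convexOn_of_divDiff_fin_three_nonneg {I : Set ℝ} (hI : Convex ℝ I) {g : ℝ → ℝ}
    (hg : ∀ a b c, a ∈ I → c ∈ I → a < b → b < c → 0 ≤ divDiff g ![a, b, c]) :
    ConvexOn ℝ I g :=
  convexOn_of_slope_mono_adjacent hI fun {a b c} ha hc hab hbc => by
    have := hg a b c ha hc hab hbc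
    rwa [divDiff_fin_three_eq_slope g hab.ne (hab.trans hbc).ne hbc.ne,
      le_div_iff₀ (sub_pos.2 (hab.trans hbc)), zero_mul, sub_nonneg, slope_def_field,
      slope_def_field] at this

lemma divDiff_fin_three_add_one (g : ℝ → ℝ) (z : ℝ) :
    divDiff g ![z, z + 1, z + 2] = (g z - 2 * g (z + 1) + g (z + 2)) / 2 := by
  rw [divDiff_fin_three]
  norm_num
  ring

lemma NConcaveOn.convexOn_of_divDiff_add_one_nonneg {g : ℝ → ℝ} (hg : NConcaveOn 2 (Ioi 0) g)
    (hg₁ : ∀ z > 0, 0 ≤ divDiff g ![z, z + 1, z + 2]) : ConvexOn ℝ (Ioi 0) g :=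
  convexOn_of_divDiff_fin_three_nonneg (convex_Ioi 0) fun a b c ha hc hab hbc => by
    have hb : b ∈ Ioi (0 : ℝ) := (Set.mem_Ioi.1 ha).trans hab
    have hc₁ : c + 1 ∈ Ioi (0 : ℝ) := by simp only [Set.mem_Ioi] at *; linarith
    have hc₂ : c + 2 ∈ Ioi (0 : ℝ) := by simp only [Set.mem_Ioi] at *; linarith
    calc 0 ≤ divDiff g ![c, c + 1, c + 2] := hg₁ c hc
      _ ≤ divDiff g ![b, c, c + 1] :=
        hg.divDiff_fin_three_le hb hc hc₁ hc₂ hbc (by linarith) (by linarith)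
      _ ≤ divDiff g ![a, b, c] := hg.divDiff_fin_three_le ha hb hc hc₁ hab hbc (by linarith)

/-- A Bohr–Mollerup type theorem: the gamma function is the unique positive solution of
`f(x+1) = x f(x)`, `f(1) = 1` which is log-concave of the second order on `(0,∞)`. -/
theorem gamma_unique_of_second_order_logConcave :
    ((∀ x > (0 : ℝ), Real.Gamma (x + 1) = x * Real.Gamma x) ∧
      Real.Gamma 1 = 1 ∧
      NConcaveOn 2 (Set.Ioi (0 : ℝ)) (fun x => Real.log (Real.Gamma x))) ∧
    ∀ f : ℝ → ℝ, (∀ x > 0, 0 < f x) →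
      (∀ x > 0, f (x + 1) = x * f x) →
      f 1 = 1 →
      NConcaveOn 2 (Set.Ioi (0 : ℝ)) (fun x => Real.log (f x)) →
      ∀ x > 0, f x = Real.Gamma x := by
  refine ⟨⟨fun x hx => Gamma_add_one hx.ne', Gamma_one, nConcaveOn_two_log_Gamma⟩, ?_⟩
  intro f hf_pos hf_feq hf_one hf_conc x hx
  have hlog_feq : ∀ z > 0, log (f (z + 1)) = log z + log (f z) := fun z hz => by
    rw [hf_feq z hz, log_mul hz.ne' (hf_pos z hz).ne']
  have hconv : ConvexOn ℝ (Ioi 0) (log ∘ f) :=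
    hf_conc.convexOn_of_divDiff_add_one_nonneg fun z hz => by
      rw [divDiff_fin_three_add_one, show z + 2 = z + 1 + 1 by ring,
        hlog_feq (z + 1) (by linarith), hlog_feq z hz]
      have := log_le_log hz (lt_add_one z).le
      linarith
  exact eq_Gamma_of_log_convex hconv (hf_feq _) (hf_pos _) hf_one hx
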